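/- arXiv:1801.09516 — 2 statements merged into one kernel-verified Lean document; each statement's English description precedes it below -/
import Mathlib

section
/- Let k ≥ 2 and n_0,…,n_{k−1} ≥ 1. The number of necklaces with content (n_0,…,n_{k−1}) over {0,…,k−1} equals (1/n) · Σ_{j | gcd(n_0,…,n_{k−1})} φ(j) · (n/j)! / ((n_0/j)! ⋯ (n_{k−1}/j)!), where n = n_0 + ⋯ + n_{k−1}. -/
/-- `w` is a necklace: lexicographically ≤ all of its rotations. -/
def IsNecklace (w : List ℕ) : Prop := ∀ i : ℕ, w ≤ w.rotate i

/-- `w` is a Lyndon word: nonempty and strictly smaller than all nontrivial rotations. -/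
def IsLyndon (w : List ℕ) : Prop :=
  w ≠ [] ∧ ∀ i : ℕ, 0 < i → i < w.length → w < w.rotate i

/-- `w` is a prenecklace over the alphabet `{0,…,k-1}`. -/
def IsPrenecklace (k : ℕ) (w : List ℕ) : Prop :=
  ∃ v : List ℕ, w <+: v ∧ (∀ a ∈ v, a < k) ∧ IsNecklace v

/-- Length of the longest prefix of `w` that is a Lyndon word. -/
noncomputable def lyn (w : List ℕ) : ℕ :=
  sSup {p | p ≤ w.length ∧ IsLyndon (w.take p)}

/-- Number of binary necklaces of length `n` and density `d`. -/
noncomputable def N (n d : ℕ) : ℕ :=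
  {w : List ℕ | w.length = n ∧ (∀ a ∈ w, a < 2) ∧ w.count 1 = d ∧ IsNecklace w}.ncard

/-- Number of binary Lyndon words of length `n` and density `d`. -/
noncomputable def L (n d : ℕ) : ℕ :=
  {w : List ℕ | w.length = n ∧ (∀ a ∈ w, a < 2) ∧ w.count 1 = d ∧ IsLyndon w}.ncard

/-- Number of necklaces over `{0,…,k-1}` with content `c`. -/
noncomputable def Nk (k : ℕ) (c : Fin k → ℕ) : ℕ :=
  {w : List ℕ | (∀ a ∈ w, a < k) ∧ (∀ i : Fin k, w.count i.val = c i) ∧ IsNecklace w}.ncard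

/-- Number of Lyndon words over `{0,…,k-1}` with content `c`. -/
noncomputable def Lk (k : ℕ) (c : Fin k → ℕ) : ℕ :=
  {w : List ℕ | (∀ a ∈ w, a < k) ∧ (∀ i : Fin k, w.count i.val = c i) ∧ IsLyndon w}.ncard

/-!
Burnside's lemma for the cyclic group `ZMod n` rotating the words of content `c`: each orbit
contains exactly one necklace, its lexicographically least rotation. A word is fixed by a rotation
`g` of order `m` iff it is constant on the cosets of `⟨g⟩`, i.e. it is a word of length `n / m`
and content `c / m` repeated `m` times; there are `(n / m)! / ∏ (c i / m)!` of these when `m`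
divides every `c i` and none otherwise. Exactly `φ m` rotations have order `m`.
-/

open Finset Function AddAction
open scoped Nat

section Content
variable {α β : Type*}

noncomputable def content (f : α → β) (b : β) : ℕ := Nat.card (f ⁻¹' {b})

theorem content_comp_equiv {γ : Type*} (f : α → β) (e : γ ≃ α) : content (f ∘ e) = content f :=
  funext fun _ => Nat.card_congr (e.subtypeEquiv fun _ => Iff.rfl)

theorem exists_perm_comp_eq_of_content_eq [Finite α] {f g : α → β} (h : content f = content g) :
    ∃ σ : Equiv.Perm α, g ∘ σ = f :=
  have e (b : β) : {a // f a = b} ≃ {a // g a = b} := (Finite.card_eq.mp (congrFun h b)).some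
  ⟨Equiv.ofFiberEquiv e, funext (Equiv.ofFiberEquiv_map e)⟩

theorem exists_content_eq [Finite α] [Fintype β] {c : β → ℕ} (hc : ∑ b, c b = Nat.card α) :
    ∃ f : α → β, content f = c := by
  obtain ⟨e⟩ : Nonempty (α ≃ Σ b, Fin (c b)) := Finite.card_eq.mp (by simp [hc])
  refine ⟨Sigma.fst ∘ e, funext fun b => ?_⟩
  rw [content_comp_equiv, content, ← Nat.card_fin (c b)]
  exact Nat.card_congr (Equiv.sigmaSubtype b)

/-- Orbit–stabilizer for `Perm α` acting on `α → β` by precomposition. -/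
theorem card_content_eq_mul [Finite α] [Fintype β] (f : α → β) :
    Nat.card {g : α → β // content g = content f} * ∏ b, (content f b)! = (Nat.card α)! := by
  classical
  have := Fintype.ofFinite α
  have horbit : MulAction.orbit (Equiv.Perm α)ᵈᵐᵃ f = {g | content g = content f} := by
    ext g
    constructor
    · rintro ⟨σ, rfl⟩
      exact content_comp_equiv f (DomMulAct.mk.symm σ)
    · intro h
      obtain ⟨σ, hσ⟩ := exists_perm_comp_eq_of_content_eq h
      exact ⟨DomMulAct.mk σ, hσ⟩
  have hstab : Nat.card (MulAction.stabilizer (Equiv.Perm α)ᵈᵐᵃ f) = ∏ b, (content f b)! := by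
    rw [Nat.card_congr (Equiv.subtypeEquiv (q := fun σ : Equiv.Perm α => f ∘ σ = f)
      DomMulAct.mk.symm fun _ => DomMulAct.mem_stabilizer_iff),
      Nat.card_eq_fintype_card, DomMulAct.stabilizer_card]
    simp only [content, Nat.card_eq_fintype_card]
    rfl
  rw [← hstab, ← Nat.card_perm, Nat.card_congr (DomMulAct.mk (M := Equiv.Perm α)),
    ← (MulAction.stabilizer (Equiv.Perm α)ᵈᵐᵃ f).index_mul_card,
    MulAction.index_stabilizer, horbit]
  rfl

theorem card_content_eq [Finite α] [Fintype β] {c : β → ℕ} (hc : ∑ b, c b = Nat.card α) :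
    Nat.card {f : α → β // content f = c} = (Nat.card α)! / ∏ b, (c b)! := by
  obtain ⟨f, rfl⟩ := exists_content_eq hc
  rw [← card_content_eq_mul f, Nat.mul_div_cancel _ (by positivity)]

theorem card_nsmul_content_eq [Finite α] [Fintype β] {m : ℕ} (hm : 0 < m) {c : β → ℕ}
    (hc : ∑ b, c b = m * Nat.card α) :
    Nat.card {f : α → β // m • content f = c} =
      if ∀ b, m ∣ c b then (Nat.card α)! / ∏ b, (c b / m)! else 0 := by
  split_ifs with hdvd
  · have hiff (f : α → β) : m • content f = c ↔ content f = fun b => c b / m := by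
      simp only [funext_iff, Pi.smul_apply, smul_eq_mul]
      exact forall_congr' fun b => by
        rw [Nat.eq_div_iff_mul_eq_left hm.ne' (hdvd b), mul_comm, eq_comm]
    rw [Nat.card_congr (Equiv.subtypeEquivRight hiff), card_content_eq]
    rw [← Nat.sum_div fun b _ => hdvd b, hc, Nat.mul_div_cancel_left _ hm]
  · obtain ⟨b, hb⟩ := not_forall.mp hdvd
    exact Nat.card_eq_zero.mpr <| .inl ⟨fun f => hb ⟨content f.1 b, (congrFun f.2 b).symm⟩⟩

end Content

section Translation
variable {G β : Type*} [AddGroup G]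

theorem content_comp_mk (H : AddSubgroup G) (f : G ⧸ H → β) :
    content (f ∘ QuotientAddGroup.mk) = Nat.card H • content f :=
  funext fun b => by
    rw [content, Set.preimage_comp,
      Nat.card_congr (QuotientAddGroup.preimageMkEquivAddSubgroupProdSet H _), Nat.card_prod]
    rfl

theorem exists_comp_mk_eq {H : AddSubgroup G} {f : G → β} (hf : ∀ h ∈ H, ∀ x, f (x + h) = f x) :
    ∃ f' : G ⧸ H → β, f' ∘ QuotientAddGroup.mk = f :=
  ⟨fun q => f q.out, funext fun x => by
    obtain ⟨h, hh⟩ := QuotientAddGroup.mk_out_eq_add H x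
    simp only [comp_apply, hh, hf h h.2]⟩

/-- Words of content `c` whose positions are the elements of `G`, so that for `G = ZMod n` the
rotations of a word are its translates. -/
def Word (G β : Type*) (c : β → ℕ) : Type _ := {f : G → β // content f = c}

variable {c : β → ℕ}

instance : AddAction G (Word G β c) where
  vadd g f := ⟨fun x => f.1 (x + g), (content_comp_equiv f.1 (Equiv.addRight g)).trans f.2⟩
  zero_vadd f := Subtype.ext <| funext fun x => congrArg f.1 (add_zero x)
  add_vadd g h f := Subtype.ext <| funext fun x => congrArg f.1 (add_assoc x g h).symm

instance [Finite G] [Finite β] : Finite (Word G β c) := Subtype.finite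

theorem Word.mem_fixedBy_iff {g : G} {f : Word G β c} :
    f ∈ fixedBy (Word G β c) g ↔ ∀ h ∈ AddSubgroup.zmultiples g, ∀ x, f.1 (x + h) = f.1 x := by
  rw [mem_fixedBy, ← mem_stabilizer_iff, ← AddSubgroup.zmultiples_le]
  simp only [SetLike.le_def, mem_stabilizer_iff]
  exact forall₂_congr fun h _ => Subtype.ext_iff.trans funext_iff

theorem Word.card_quotient_eq_card_fixedBy (g : G) :
    Nat.card {f : G ⧸ AddSubgroup.zmultiples g → β // addOrderOf g • content f = c} =
      Nat.card (fixedBy (Word G β c) g) := by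
  have hcontent (f : G ⧸ AddSubgroup.zmultiples g → β) :
      content (f ∘ QuotientAddGroup.mk) = addOrderOf g • content f := by
    rw [content_comp_mk, Nat.card_zmultiples]
  refine Nat.card_eq_of_bijective
    (fun f => ⟨⟨f.1 ∘ QuotientAddGroup.mk, (hcontent f.1).trans f.2⟩, Word.mem_fixedBy_iff.mpr
      fun h hh x => congrArg f.1 (QuotientAddGroup.mk_add_of_mem x hh)⟩) ⟨?_, ?_⟩
  · intro f₁ f₂ h
    exact Subtype.ext <| QuotientAddGroup.mk_surjective.injective_comp_right
      (congrArg (fun F : fixedBy (Word G β c) g => F.1.1) h)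
  · rintro ⟨f, hf⟩
    obtain ⟨f', hf'⟩ := exists_comp_mk_eq (Word.mem_fixedBy_iff.mp hf)
    exact ⟨⟨f', (hcontent f').symm.trans (hf' ▸ f.2)⟩, Subtype.ext (Subtype.ext hf')⟩

def fixedWordCount {β : Type*} [Fintype β] (n : ℕ) (c : β → ℕ) (m : ℕ) : ℕ :=
  if ∀ b, m ∣ c b then (n / m)! / ∏ b, (c b / m)! else 0

theorem Word.card_fixedBy [Finite G] [Fintype β] (hc : ∑ b, c b = Nat.card G) (g : G) :
    Nat.card (fixedBy (Word G β c) g) = fixedWordCount (Nat.card G) c (addOrderOf g) := by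
  have hm : 0 < addOrderOf g := addOrderOf_pos g
  have hG : Nat.card G = addOrderOf g * Nat.card (G ⧸ AddSubgroup.zmultiples g) := by
    rw [AddSubgroup.card_eq_card_quotient_mul_card_addSubgroup (AddSubgroup.zmultiples g),
      Nat.card_zmultiples, mul_comm]
  rw [← Word.card_quotient_eq_card_fixedBy, card_nsmul_content_eq hm (hc.trans hG),
    fixedWordCount, hG, Nat.mul_div_cancel_left _ hm]

theorem Word.card_orbits_mul_card [Fintype G] [Fintype β] (hc : ∑ b, c b = Nat.card G) :
    Nat.card (orbitRel.Quotient G (Word G β c)) * Nat.card G =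
      ∑ g : G, fixedWordCount (Nat.card G) c (addOrderOf g) := by
  have (g : G) : Fintype (fixedBy (Word G β c) g) := Fintype.ofFinite _
  have : Fintype (orbitRel.Quotient G (Word G β c)) := Fintype.ofFinite _
  have burnside := sum_card_fixedBy_eq_card_orbits_mul_card_addGroup G (Word G β c)
  simp only [← Nat.card_eq_fintype_card] at burnside
  rw [← burnside]
  exact sum_congr rfl fun g _ => Word.card_fixedBy hc g

end Translation

theorem IsAddCyclic.sum_comp_addOrderOf {G M : Type*} [AddGroup G] [IsAddCyclic G] [Fintype G]
    [AddCommMonoid M] (F : ℕ → M) :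
    ∑ g : G, F (addOrderOf g) = ∑ j ∈ (Fintype.card G).divisors, φ j • F j := by
  classical
  rw [← sum_fiberwise_of_maps_to (g := addOrderOf) (t := (Fintype.card G).divisors)
    fun g _ => Nat.mem_divisors.mpr ⟨addOrderOf_dvd_card, Fintype.card_ne_zero⟩]
  refine sum_congr rfl fun j hj => ?_
  rw [sum_congr rfl fun g hg => congrArg F (mem_filter.mp hg).2, sum_const,
    IsAddCyclic.card_addOrderOf_eq_totient (Nat.dvd_of_mem_divisors hj)]

section Necklace

theorem IsNecklace.eq_of_isRotated {v w : List ℕ} (hv : IsNecklace v) (hw : IsNecklace w)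
    (h : v ~r w) : v = w := by
  obtain ⟨s, hs⟩ := h.symm
  obtain ⟨t, rfl⟩ := h
  exact le_antisymm (hv t) ((hw s).trans_eq hs)

theorem exists_isNecklace_isRotated (w : List ℕ) : ∃ v, v ~r w ∧ IsNecklace v := by
  obtain ⟨v, hv, hmin⟩ := w.cyclicPermutations.toFinset.exists_min_image id
    ⟨w, List.mem_toFinset.mpr (List.mem_cyclicPermutations_self w)⟩
  have hvw : v ~r w := List.mem_cyclicPermutations_iff.mp (List.mem_toFinset.mp hv)
  refine ⟨v, hvw, fun i => hmin _ ?_⟩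
  rw [List.mem_toFinset, List.mem_cyclicPermutations_iff]
  exact (List.IsRotated.forall v i).trans hvw

theorem length_eq_sum_count {k : ℕ} {w : List ℕ} (hk : ∀ a ∈ w, a < k) :
    w.length = ∑ i : Fin k, w.count i.val := by
  rw [Fin.sum_univ_eq_sum_range (fun i => w.count i)]
  simpa using (Multiset.sum_count_eq_card (s := range k) (m := (w : Multiset ℕ))
    fun a ha => mem_range.mpr (hk a ha)).symm

theorem count_ofFn_val {n k : ℕ} (f : Fin n → Fin k) (i : Fin k) :
    (List.ofFn fun j => (f j).val).count i.val = content f i := by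
  classical
  rw [content, ← Multiset.coe_count, ← Fin.univ_val_map, Multiset.count_map,
    Nat.card_eq_card_toFinset]
  simp only [Fin.val_inj, Set.toFinset_card, Fintype.card_ofFinset, Set.mem_preimage,
    Set.mem_singleton_iff, eq_comm]
  rfl

variable {n k : ℕ} [NeZero n]

theorem ZMod.val_finEquiv (i : Fin n) : (ZMod.finEquiv n i).val = i := by
  cases n with
  | zero => exact absurd rfl (NeZero.ne 0)
  | succ m => rfl

def wordToList (f : ZMod n → Fin k) : List ℕ := List.ofFn fun i => (f (ZMod.finEquiv n i)).val

theorem length_wordToList (f : ZMod n → Fin k) : (wordToList f).length = n := List.length_ofFn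

theorem wordToList_injective : Injective (wordToList : (ZMod n → Fin k) → List ℕ) :=
  fun _ _ h => (ZMod.finEquiv n).surjective.injective_comp_right <|
    Fin.val_injective.comp_left (List.ofFn_injective h)

theorem lt_of_mem_wordToList {f : ZMod n → Fin k} {a : ℕ} (ha : a ∈ wordToList f) : a < k := by
  obtain ⟨i, rfl⟩ := List.mem_ofFn.mp ha
  exact (f _).isLt

theorem count_wordToList (f : ZMod n → Fin k) (i : Fin k) :
    (wordToList f).count i.val = content f i :=
  (count_ofFn_val _ i).trans (congrFun (content_comp_equiv f (ZMod.finEquiv n).toEquiv) i)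

theorem wordToList_comp_add_right (f : ZMod n → Fin k) (g : ZMod n) :
    wordToList (fun x => f (x + g)) = (wordToList f).rotate g.val := by
  refine List.ext_getElem (by simp [length_wordToList]) fun i h₁ h₂ => ?_
  have hi : i < n := by simpa [length_wordToList] using h₁
  simp only [wordToList, List.getElem_rotate, List.getElem_ofFn, List.length_ofFn]
  congr 2
  apply ZMod.val_injective
  simp [ZMod.val_add, ZMod.val_finEquiv]

theorem exists_wordToList_eq {w : List ℕ} (hlen : w.length = n) (hk : ∀ a ∈ w, a < k) :
    ∃ f : ZMod n → Fin k, wordToList f = w := by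
  subst hlen
  refine ⟨fun x => ⟨w[(ZMod.finEquiv _).symm x], hk _ (List.getElem_mem _)⟩, ?_⟩
  simp [wordToList]

end Necklace

section Orbits
variable {n k : ℕ} [NeZero n] {c : Fin k → ℕ}

theorem Word.wordToList_natCast_vadd (t : ℕ) (f : Word (ZMod n) (Fin k) c) :
    wordToList ((t : ZMod n) +ᵥ f).1 = (wordToList f.1).rotate t := by
  rw [← List.rotate_mod, length_wordToList, ← ZMod.val_natCast]
  exact wordToList_comp_add_right f.1 _

theorem Word.orbitRel_iff_isRotated {f f' : Word (ZMod n) (Fin k) c} :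
    orbitRel (ZMod n) _ f f' ↔ wordToList f'.1 ~r wordToList f.1 := by
  rw [orbitRel_apply]
  constructor
  · rintro ⟨g, rfl⟩
    exact ⟨g.val, (wordToList_comp_add_right f'.1 g).symm⟩
  · rintro ⟨t, ht⟩
    exact ⟨t, Subtype.ext <| wordToList_injective <| (Word.wordToList_natCast_vadd t f').trans ht⟩

theorem Nk_eq_card_orbits (hc : ∑ i, c i = n) :
    Nk k c = Nat.card (orbitRel.Quotient (ZMod n) (Word (ZMod n) (Fin k) c)) := by
  let necklaceWords := {f : Word (ZMod n) (Fin k) c // IsNecklace (wordToList f.1)}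
  have hlist : Nat.card necklaceWords = Nk k c := by
    refine Nat.card_eq_of_bijective (fun f => ⟨wordToList f.1.1, fun _ => lt_of_mem_wordToList,
      fun i => (count_wordToList _ i).trans (congrFun f.1.2 i), f.2⟩) ⟨?_, ?_⟩
    · intro f f' h
      exact Subtype.ext <| Subtype.ext <| wordToList_injective (congrArg Subtype.val h)
    · rintro ⟨w, hk, hcount, hw⟩
      obtain ⟨f, rfl⟩ := exists_wordToList_eq ((length_eq_sum_count hk).trans
        ((sum_congr rfl fun i _ => hcount i).trans hc)) hk
      exact ⟨⟨⟨f, funext fun i => (count_wordToList f i).symm.trans (hcount i)⟩, hw⟩, rfl⟩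
  rw [← hlist]
  refine Nat.card_eq_of_bijective (fun f => ⟦f.1⟧) ⟨fun f f' h => ?_, ?_⟩
  · exact Subtype.ext <| Subtype.ext <| wordToList_injective <| f.2.eq_of_isRotated f'.2
      (Word.orbitRel_iff_isRotated.mp (Quotient.exact h.symm))
  · rintro ⟨f⟩
    obtain ⟨v, hvf, hv⟩ := exists_isNecklace_isRotated (wordToList f.1)
    obtain ⟨t, ht⟩ := hvf.symm
    refine ⟨⟨(t : ZMod n) +ᵥ f, ?_⟩, Quotient.sound (mem_orbit f _)⟩
    rwa [Word.wordToList_natCast_vadd, ht]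

end Orbits

theorem Nat.divisors_gcd_eq_filter {ι : Type*} {s : Finset ι} {c : ι → ℕ} {n : ℕ}
    (hn : ∑ i ∈ s, c i = n) (hn0 : n ≠ 0) :
    (s.gcd c).divisors = n.divisors.filter fun j => ∀ i ∈ s, j ∣ c i := by
  subst hn
  have hgcd : s.gcd c ≠ 0 := fun h =>
    hn0 <| sum_eq_zero fun i hi => Finset.gcd_eq_zero_iff.mp h i hi
  ext j
  simp only [mem_filter, Nat.mem_divisors, Finset.dvd_gcd_iff]
  exact ⟨fun h => ⟨⟨dvd_sum h.1, hn0⟩, h.1⟩, fun h => ⟨h.2, hgcd⟩⟩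

theorem necklace_content_count_formula_general (k : ℕ) (c : Fin k → ℕ) (n : ℕ) (hn : n = ∑ i, c i) :
    n * Nk k c = ∑ j ∈ (Finset.univ.gcd c).divisors,
      Nat.totient j * (Nat.factorial (n / j) / ∏ i : Fin k, Nat.factorial (c i / j)) := by
  rcases eq_or_ne n 0 with rfl | hn0
  · have : univ.gcd c = 0 := Finset.gcd_eq_zero_iff.mpr fun i hi => sum_eq_zero_iff.mp hn.symm i hi
    simp [this]
  have : NeZero n := ⟨hn0⟩
  calc n * Nk k c
      = Nat.card (orbitRel.Quotient (ZMod n) (Word (ZMod n) (Fin k) c)) * Nat.card (ZMod n) := by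
        rw [Nk_eq_card_orbits hn.symm, Nat.card_zmod, mul_comm]
    _ = ∑ g : ZMod n, fixedWordCount n c (addOrderOf g) := by
        rw [Word.card_orbits_mul_card (by rw [Nat.card_zmod, hn]), Nat.card_zmod]
    _ = ∑ j ∈ n.divisors, φ j * fixedWordCount n c j := by
        rw [IsAddCyclic.sum_comp_addOrderOf, ZMod.card]
        rfl
    _ = _ := by
        rw [Nat.divisors_gcd_eq_filter hn.symm hn0, sum_filter]
        simp only [fixedWordCount, mul_ite, mul_zero, mem_univ, true_implies]

/-- Enumeration formula for necklaces with fixed content. -/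
theorem necklace_content_count_formula (k : ℕ) (hk : 2 ≤ k) (c : Fin k → ℕ)
    (hc : ∀ i, 1 ≤ c i) (n : ℕ) (hn : n = ∑ i, c i) :
    n * Nk k c = ∑ j ∈ (Finset.univ.gcd c).divisors,
      Nat.totient j * (Nat.factorial (n / j) / ∏ i : Fin k, Nat.factorial (c i / j)) :=
  necklace_content_count_formula_general k c n hn
end

section
/- Let k ≥ 2 and n_0,…,n_{k−1} ≥ 1. The number of Lyndon words with content (n_0,…,n_{k−1}) over {0,…,k−1} equals (1/n) · Σ_{j | gcd(n_0,…,n_{k−1})} μ(j) · (n/j)! / ((n_0/j)! ⋯ (n_{k−1}/j)!), where n = n_0 + ⋯ + n_{k−1}. -/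
/-!
Every nonempty word `w` is, in exactly one way, a power `u ^ j` of a primitive word `u`: `u` is
the prefix of `w` of length the rotation period of `w`. The exponent `j` divides every letter
multiplicity, so the multinomial number `M(c)` of words with content `c` is the sum over
`j ∣ gcd c` of the number `P(c / j)` of primitive words with content `c / j`. The rotations of a
primitive word of length `n` are `n` distinct primitive words, exactly one of which is Lyndon,
so `P(c) = n · L(c)`. Möbius inversion over the divisors of `gcd c` turns
`M(c / m) = ∑_{i ∣ gcd c / m} P(c / (m i))` into `P(c) = ∑_{j ∣ gcd c} μ(j) M(c / j)`.
-/

open Finset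
open scoped Nat

namespace List

variable {α : Type*}

@[simp] theorem length_flatten_replicate (m : ℕ) (u : List α) :
    (replicate m u).flatten.length = m * u.length := by
  simp [length_flatten]

@[simp] theorem count_flatten_replicate [BEq α] (a : α) (m : ℕ) (u : List α) :
    (replicate m u).flatten.count a = m * u.count a := by
  simp [count_flatten]

theorem getElem_flatten_replicate (m : ℕ) (u : List α) {i : ℕ}
    (hi : i < (replicate m u).flatten.length) :
    (replicate m u).flatten[i] = u[i % u.length]'(Nat.mod_lt _ (by
      rw [length_flatten_replicate] at hi
      exact Nat.pos_of_mul_pos_left (Nat.zero_lt_of_lt hi))) := by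
  induction m generalizing i with
  | zero => simp at hi
  | succ m ih =>
    simp only [replicate_succ, flatten_cons, getElem_append]
    split_ifs with h
    · simp [Nat.mod_eq_of_lt h]
    · rw [ih]
      congr 1
      rw [← Nat.mod_eq_sub_mod (by omega)]

theorem take_flatten_replicate {m : ℕ} (hm : m ≠ 0) (u : List α) :
    (replicate m u).flatten.take u.length = u := by
  obtain ⟨m, rfl⟩ := Nat.exists_eq_succ_of_ne_zero hm
  simp [replicate_succ]

theorem flatten_replicate_injective {m : ℕ} (hm : m ≠ 0) :
    Function.Injective fun u : List α => (replicate m u).flatten := by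
  intro u v (huv : (replicate m u).flatten = (replicate m v).flatten)
  have hlen : u.length = v.length := by simpa [hm] using congrArg length huv
  rw [← take_flatten_replicate hm u, ← take_flatten_replicate hm v, huv, hlen]

theorem rotate_flatten_replicate (m : ℕ) (u : List α) (s : ℕ) :
    (replicate m u).flatten.rotate s = (replicate m (u.rotate s)).flatten := by
  refine ext_getElem (by simp) fun i _ _ => ?_
  simp only [getElem_rotate, getElem_flatten_replicate, length_rotate, length_flatten_replicate]
  congr 1
  rw [Nat.mod_mod_of_dvd _ (dvd_mul_left _ _), Nat.mod_add_mod]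

noncomputable def rotationPeriod (w : List α) : ℕ :=
  Function.minimalPeriod (fun l : List α => l.rotate 1) w

theorem iterate_rotate_one (w : List α) (s : ℕ) :
    (fun l : List α => l.rotate 1)^[s] w = w.rotate s := by
  induction s with
  | zero => simp
  | succ s ih => rw [Function.iterate_succ_apply', ih, rotate_rotate]

theorem rotate_eq_self_iff_rotationPeriod_dvd {w : List α} {s : ℕ} :
    w.rotate s = w ↔ w.rotationPeriod ∣ s := by
  rw [rotationPeriod, ← Function.isPeriodicPt_iff_minimalPeriod_dvd, Function.IsPeriodicPt,
    Function.IsFixedPt, iterate_rotate_one]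

theorem rotationPeriod_dvd_length (w : List α) : w.rotationPeriod ∣ w.length :=
  rotate_eq_self_iff_rotationPeriod_dvd.1 w.rotate_length

theorem rotationPeriod_pos (w : List α) : 0 < w.rotationPeriod := by
  rcases eq_or_ne w [] with rfl | hw
  · exact Function.IsPeriodicPt.minimalPeriod_pos one_pos
      (by simp [Function.IsPeriodicPt, Function.IsFixedPt])
  · exact Nat.pos_of_dvd_of_pos w.rotationPeriod_dvd_length (length_pos_iff.2 hw)

theorem rotationPeriod_le_length {w : List α} (hw : w ≠ []) : w.rotationPeriod ≤ w.length :=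
  Nat.le_of_dvd (length_pos_iff.2 hw) w.rotationPeriod_dvd_length

theorem rotationPeriod_rotate (w : List α) (s : ℕ) :
    (w.rotate s).rotationPeriod = w.rotationPeriod := by
  rw [rotationPeriod, rotationPeriod, ← iterate_rotate_one]
  exact Function.minimalPeriod_apply_iterate
    (Function.minimalPeriod_pos_iff_mem_periodicPts.1 w.rotationPeriod_pos) s

theorem flatten_replicate_take_rotationPeriod (w : List α) :
    (replicate (w.length / w.rotationPeriod) (w.take w.rotationPeriod)).flatten = w := by
  rcases eq_or_ne w [] with rfl | hw
  · simp
  set p := w.rotationPeriod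
  have hp : p ≤ w.length := rotationPeriod_le_length hw
  refine ext_getElem ?_ fun i _ hi => ?_
  · simpa [hp] using Nat.div_mul_cancel w.rotationPeriod_dvd_length
  have hper : w.rotate (p * (i / p)) = w :=
    rotate_eq_self_iff_rotationPeriod_dvd.2 (dvd_mul_right _ _)
  have hmod : i % p < (w.rotate (p * (i / p))).length :=
    (length_rotate w _).symm ▸ (Nat.mod_lt _ w.rotationPeriod_pos).trans_le hp
  have key := getElem_rotate w (p * (i / p)) (i % p) hmod
  simp only [hper, Nat.mod_add_div, Nat.mod_eq_of_lt hi] at key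
  simp [getElem_flatten_replicate, hp, key]

/-- Equivalently: `w` is nonempty and not a power `u ^ m` with `m ≥ 2`. -/
def IsPrimitive (w : List α) : Prop := w.rotationPeriod = w.length

variable {u w : List α}

theorem IsPrimitive.rotationPeriod_eq (hw : w.IsPrimitive) : w.rotationPeriod = w.length := hw

theorem IsPrimitive.ne_nil (hw : w.IsPrimitive) : w ≠ [] := by
  rintro rfl
  have : ([] : List α).rotationPeriod = 1 :=
    Function.minimalPeriod_eq_one_iff_isFixedPt.2 (by simp [Function.IsFixedPt])
  simp [IsPrimitive, this] at hw

theorem IsPrimitive.rotate (hw : w.IsPrimitive) (s : ℕ) : (w.rotate s).IsPrimitive := by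
  rw [IsPrimitive, rotationPeriod_rotate, length_rotate]
  exact hw

theorem IsPrimitive.rotate_injOn (hw : w.IsPrimitive) :
    Set.InjOn w.rotate (Set.Iio w.length) := by
  have := Function.iterate_injOn_Iio_minimalPeriod (f := fun l : List α => l.rotate 1) (x := w)
  simp only [iterate_rotate_one] at this
  change Set.InjOn _ (Set.Iio w.rotationPeriod) at this
  rwa [hw.rotationPeriod_eq] at this

theorem IsPrimitive.rotationPeriod_flatten_replicate (hu : u.IsPrimitive) {m : ℕ} (hm : m ≠ 0) :
    (replicate m u).flatten.rotationPeriod = u.length := by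
  apply Nat.dvd_antisymm
  · rw [← rotate_eq_self_iff_rotationPeriod_dvd, rotate_flatten_replicate, rotate_length]
  · have h := rotate_eq_self_iff_rotationPeriod_dvd.2
      (dvd_refl (replicate m u).flatten.rotationPeriod)
    rw [rotate_flatten_replicate] at h
    rw [← hu.rotationPeriod_eq]
    exact rotate_eq_self_iff_rotationPeriod_dvd.1 (flatten_replicate_injective hm h)

theorem isPrimitive_take_rotationPeriod (hw : w ≠ []) :
    (w.take w.rotationPeriod).IsPrimitive := by
  set v := w.take w.rotationPeriod
  have hv : v.length = w.rotationPeriod := by simp [v, rotationPeriod_le_length hw]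
  rw [IsPrimitive, hv]
  refine Nat.dvd_antisymm (hv ▸ v.rotationPeriod_dvd_length) ?_
  rw [← rotate_eq_self_iff_rotationPeriod_dvd]
  conv => enter [1, 1]; rw [← flatten_replicate_take_rotationPeriod w]
  rw [rotate_flatten_replicate, rotate_eq_self_iff_rotationPeriod_dvd.2 (dvd_refl _),
    flatten_replicate_take_rotationPeriod]

end List

theorem IsLyndon.isPrimitive {w : List ℕ} (hw : IsLyndon w) : w.IsPrimitive := by
  by_contra hne
  have hlt := hw.2 _ w.rotationPeriod_pos
    (lt_of_le_of_ne (List.rotationPeriod_le_length hw.1) hne)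
  rw [List.rotate_eq_self_iff_rotationPeriod_dvd.2 (dvd_refl _)] at hlt
  exact lt_irrefl _ hlt

theorem IsLyndon.eq_of_rotate_eq {u v : List ℕ} (hu : IsLyndon u) (hv : IsLyndon v) {s : ℕ}
    (h : u.rotate s = v) : u = v := by
  rw [← List.rotate_mod] at h
  rcases Nat.eq_zero_or_pos (s % u.length) with h0 | h0
  · rwa [h0, List.rotate_zero] at h
  have hs : s % u.length < u.length := Nat.mod_lt _ (List.length_pos_iff.2 hu.1)
  have hvu : v.rotate (u.length - s % u.length) = u := by
    rw [← h, List.rotate_rotate, Nat.add_sub_cancel' hs.le, List.rotate_length]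
  have hlen : v.length = u.length := by rw [← h, List.length_rotate]
  exact absurd (h ▸ hu.2 _ h0 hs) (lt_asymm (hvu ▸ hv.2 _ (by omega) (by omega)))

theorem List.IsPrimitive.exists_isLyndon_rotate {w : List ℕ} (hw : w.IsPrimitive) :
    ∃ s, IsLyndon (w.rotate s) := by
  have hn : 0 < w.length := List.length_pos_iff.2 hw.ne_nil
  obtain ⟨t, -, ht⟩ := (Finset.range w.length).exists_min_image w.rotate ⟨0, by simpa⟩
  refine ⟨t, (hw.rotate t).ne_nil, fun i hi hin => ?_⟩
  rw [List.length_rotate] at hin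
  have hle : w.rotate t ≤ (w.rotate t).rotate i := by
    rw [List.rotate_rotate, ← List.rotate_mod w (t + i)]
    exact ht _ (mem_range.2 (Nat.mod_lt _ hn))
  refine lt_of_le_of_ne hle fun heq => ?_
  have := List.rotate_eq_self_iff_rotationPeriod_dvd.1 heq.symm
  rw [(hw.rotate t).rotationPeriod_eq, List.length_rotate] at this
  exact absurd (Nat.le_of_dvd hi this) (by omega)

open Classical in
theorem card_filter_isPrimitive {S : Finset (List ℕ)} {n : ℕ} (hlen : ∀ w ∈ S, w.length = n)
    (hrot : ∀ w ∈ S, ∀ s, w.rotate s ∈ S) :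
    #(S.filter List.IsPrimitive) = n * #(S.filter IsLyndon) := by
  have himage : S.filter List.IsPrimitive =
      (S.filter IsLyndon ×ˢ range n).image fun x => x.1.rotate x.2 := by
    ext w
    simp only [mem_filter, mem_image, mem_product, mem_range, Prod.exists]
    constructor
    · rintro ⟨hwS, hw⟩
      obtain ⟨s, hs⟩ := hw.exists_isLyndon_rotate
      obtain ⟨t, ht⟩ := List.IsRotated.symm (⟨s, rfl⟩ : w ~r w.rotate s)
      have hn : 0 < n := hlen w hwS ▸ List.length_pos_iff.2 hw.ne_nil
      refine ⟨w.rotate s, t % n, ⟨⟨hrot w hwS s, hs⟩, Nat.mod_lt _ hn⟩, ?_⟩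
      rwa [← hlen w hwS, ← List.length_rotate w s, List.rotate_mod]
    · rintro ⟨u, s, ⟨⟨huS, hu⟩, -⟩, rfl⟩
      exact ⟨hrot u huS s, hu.isPrimitive.rotate s⟩
  rw [himage, card_image_of_injOn, card_product, card_range, mul_comm]
  rintro ⟨u, s⟩ hus ⟨v, t⟩ hvt (h : u.rotate s = v.rotate t)
  simp only [coe_product, coe_filter, coe_range, Set.mem_prod, Set.mem_Iio] at hus hvt
  obtain ⟨⟨huS, hu⟩, hs⟩ := hus
  obtain ⟨⟨hvS, hv⟩, ht⟩ := hvt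
  obtain rfl : u = v := hu.eq_of_rotate_eq hv (s := s + (n - t)) (by
    rw [← List.rotate_rotate, h, List.rotate_rotate, Nat.add_sub_cancel' ht.le, ← hlen v hvS,
      List.rotate_length])
  rw [← hlen u huS] at hs ht
  rw [hu.isPrimitive.rotate_injOn hs ht h]

def HasContent (k : ℕ) (c : Fin k → ℕ) (w : List ℕ) : Prop :=
  (∀ a ∈ w, a < k) ∧ ∀ i : Fin k, w.count i.val = c i

namespace HasContent

variable {k : ℕ} {c : Fin k → ℕ} {w v : List ℕ}

theorem length_eq (hw : HasContent k c w) : w.length = ∑ i, c i := by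
  have := Multiset.sum_count_eq_card (s := range k) (m := (w : Multiset ℕ))
    fun a ha => mem_range.2 (hw.1 a ha)
  simp only [Multiset.coe_count, Multiset.coe_card] at this
  rw [← this, ← Fin.sum_univ_eq_sum_range]
  exact sum_congr rfl fun i _ => hw.2 i

theorem of_perm (hw : HasContent k c w) (h : w.Perm v) : HasContent k c v :=
  ⟨fun a ha => hw.1 a (h.mem_iff.2 ha), fun i => h.count_eq i ▸ hw.2 i⟩

theorem rotate (hw : HasContent k c w) (s : ℕ) : HasContent k c (w.rotate s) :=
  hw.of_perm (w.rotate_perm s).symm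

end HasContent

theorem setOf_hasContent_finite (k : ℕ) (c : Fin k → ℕ) : {w | HasContent k c w}.Finite := by
  refine ((List.finite_length_eq (Fin k) (∑ i, c i)).image (List.map Fin.val)).subset ?_
  intro w (hw : HasContent k c w)
  have hlt := hw.1
  exact ⟨w.pmap Fin.mk hlt, by simp [hw.length_eq], by simp [List.map_pmap]⟩

noncomputable def contentWords (k : ℕ) (c : Fin k → ℕ) : Finset (List ℕ) :=
  (setOf_hasContent_finite k c).toFinset

@[simp] theorem mem_contentWords {k : ℕ} {c : Fin k → ℕ} {w : List ℕ} :
    w ∈ contentWords k c ↔ HasContent k c w :=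
  Set.Finite.mem_toFinset _

theorem cons_hasContent_iff {k : ℕ} {c : Fin k → ℕ} (i : Fin k) (w : List ℕ) :
    HasContent k c ((i : ℕ) :: w) ↔
      0 < c i ∧ HasContent k (Function.update c i (c i - 1)) w := by
  simp only [HasContent, List.forall_mem_cons, List.count_cons, beq_iff_eq, i.isLt, true_and,
    Fin.val_eq_val, Function.update_apply]
  constructor
  · rintro ⟨hlt, hcount⟩
    exact ⟨by grind, hlt, by grind⟩
  · rintro ⟨hpos, hlt, hcount⟩
    exact ⟨hlt, by grind⟩

theorem contentWords_eq_biUnion_cons {k : ℕ} {c : Fin k → ℕ} (hc : ∑ i, c i ≠ 0) :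
    contentWords k c = (univ.filter fun i => 0 < c i).biUnion fun i =>
      (contentWords k (Function.update c i (c i - 1))).map
        ⟨List.cons (i : ℕ), List.cons_injective⟩ := by
  ext w
  simp only [mem_contentWords, mem_biUnion, mem_filter, mem_univ, true_and, mem_map,
    Function.Embedding.coeFn_mk]
  constructor
  · intro hw
    have hw_ne : w ≠ [] := fun h => hc (by rw [← hw.length_eq, h, List.length_nil])
    obtain ⟨a, v, rfl⟩ := List.exists_cons_of_ne_nil hw_ne
    have ha : a < k := hw.1 a List.mem_cons_self
    obtain ⟨hpos, hv⟩ := (cons_hasContent_iff ⟨a, ha⟩ v).1 hw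
    exact ⟨⟨a, ha⟩, hpos, v, hv, rfl⟩
  · rintro ⟨i, hi, v, hv, rfl⟩
    exact (cons_hasContent_iff i v).2 ⟨hi, hv⟩

theorem prod_factorial_update_pred_mul {ι : Type*} [Fintype ι] [DecidableEq ι] (c : ι → ℕ)
    {i : ι} (hi : c i ≠ 0) :
    (∏ j, (Function.update c i (c i - 1) j)!) * c i = ∏ j, (c j)! := by
  rw [← mul_prod_erase univ _ (mem_univ i), ← mul_prod_erase univ _ (mem_univ i),
    Function.update_self, prod_congr rfl fun j hj => by
      rw [Function.update_of_ne (ne_of_mem_erase hj)],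
    mul_right_comm, mul_comm _ (c i), Nat.mul_factorial_pred hi]

theorem sum_update_pred {ι : Type*} [Fintype ι] [DecidableEq ι] (c : ι → ℕ) {i : ι}
    (hi : c i ≠ 0) :
    ∑ j, Function.update c i (c i - 1) j = ∑ j, c j - 1 := by
  have := add_sum_erase univ c (mem_univ i)
  rw [sum_update_of_mem (mem_univ i), ← compl_eq_univ_sdiff, compl_singleton]
  omega

theorem card_contentWords_mul_prod_factorial (k : ℕ) (c : Fin k → ℕ) :
    #(contentWords k c) * ∏ i, (c i)! = (∑ i, c i)! := by
  induction hn : ∑ i, c i generalizing c with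
  | zero =>
    have hc : ∀ i, c i = 0 := fun i => sum_eq_zero_iff.1 hn i (mem_univ i)
    have hnil : contentWords k c = {[]} := by
      ext w
      simp only [mem_contentWords, mem_singleton]
      refine ⟨fun hw => List.eq_nil_of_length_eq_zero (hw.length_eq.trans hn), ?_⟩
      rintro rfl
      exact ⟨by simp, fun i => by simp [hc i]⟩
    simp [hnil, hc]
  | succ n ih =>
    rw [contentWords_eq_biUnion_cons (by omega), card_biUnion, sum_mul]
    · calc ∑ i ∈ univ.filter (fun i => 0 < c i),
            #((contentWords k (Function.update c i (c i - 1))).map _) * ∏ j, (c j)!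
          = ∑ i ∈ univ.filter (fun i => 0 < c i), n ! * c i := by
            refine sum_congr rfl fun i hi => ?_
            have hi : c i ≠ 0 := (mem_filter.1 hi).2.ne'
            have hsum : ∑ j, Function.update c i (c i - 1) j = n := by
              rw [sum_update_pred c hi, hn, Nat.add_sub_cancel]
            rw [card_map, ← prod_factorial_update_pred_mul c hi, ← mul_assoc, ih _ hsum]
        _ = (n + 1)! := by
            rw [← mul_sum, sum_filter_of_ne fun i _ h => Nat.pos_of_ne_zero h, hn,
              Nat.factorial_succ, mul_comm]
    · intro i _ j _ hij
      simp only [Function.onFun, disjoint_left, mem_map, Function.Embedding.coeFn_mk]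
      rintro _ ⟨v, -, rfl⟩ ⟨v', -, h⟩
      exact hij (Fin.ext (List.cons_eq_cons.1 h).1).symm

theorem card_contentWords (k : ℕ) (c : Fin k → ℕ) :
    #(contentWords k c) = Nat.multinomial univ c := by
  refine Nat.eq_of_mul_eq_mul_right (m := ∏ i, (c i)!)
    (prod_pos fun i _ => Nat.factorial_pos (c i)) ?_
  rw [card_contentWords_mul_prod_factorial, mul_comm, Nat.multinomial_spec]

theorem hasContent_flatten_replicate_iff {k j : ℕ} {c : Fin k → ℕ} {u : List ℕ}
    (hj : j ≠ 0) :
    HasContent k (fun i => j * c i) (List.replicate j u).flatten ↔ HasContent k c u := by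
  simp only [HasContent, List.mem_flatten, List.mem_replicate, List.count_flatten_replicate,
    mul_right_inj' hj]
  constructor
  · exact fun ⟨hlt, hcount⟩ => ⟨fun a ha => hlt a ⟨u, ⟨hj, rfl⟩, ha⟩, hcount⟩
  · rintro ⟨hlt, hcount⟩
    exact ⟨fun a ⟨_, ⟨_, hv⟩, ha⟩ => hlt a (hv ▸ ha), hcount⟩

open Classical in
theorem contentWords_eq_biUnion_primitive {k : ℕ} {c : Fin k → ℕ} (hc : univ.gcd c ≠ 0) :
    contentWords k c = (univ.gcd c).divisors.biUnion fun j =>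
      ((contentWords k fun i => c i / j).filter List.IsPrimitive).image
        fun u => (List.replicate j u).flatten := by
  ext w
  simp only [mem_biUnion, Nat.mem_divisors, mem_image, mem_filter, mem_contentWords]
  constructor
  · intro hw
    have hw_ne : w ≠ [] := by
      rintro rfl
      exact hc (gcd_eq_zero_iff.2 fun i _ => (hw.2 i).symm)
    set j := w.length / w.rotationPeriod
    set v := w.take w.rotationPeriod
    have hvw : (List.replicate j v).flatten = w := w.flatten_replicate_take_rotationPeriod
    have hj : j ≠ 0 :=
      (Nat.div_pos (List.rotationPeriod_le_length hw_ne) w.rotationPeriod_pos).ne'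
    have hcount : ∀ i, c i = j * v.count i.val := fun i => by
      rw [← hw.2 i, ← hvw, List.count_flatten_replicate]
    have hdvd : ∀ i, j ∣ c i := fun i => ⟨_, hcount i⟩
    refine ⟨j, ⟨dvd_gcd fun i _ => hdvd i, hc⟩, v,
      ⟨?_, List.isPrimitive_take_rotationPeriod hw_ne⟩, hvw⟩
    rw [← hasContent_flatten_replicate_iff hj, hvw]
    convert hw using 2 with i
    exact Nat.mul_div_cancel' (hdvd i)
  · rintro ⟨j, ⟨hjg, -⟩, u, ⟨hu, -⟩, rfl⟩
    have hj : j ≠ 0 := ne_zero_of_dvd_ne_zero hc hjg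
    convert (hasContent_flatten_replicate_iff hj).2 hu using 2 with i
    exact (Nat.mul_div_cancel' (hjg.trans (gcd_dvd (mem_univ i)))).symm

open Classical in
theorem card_contentWords_eq_sum_card_primitive {k : ℕ} {c : Fin k → ℕ}
    (hc : univ.gcd c ≠ 0) :
    #(contentWords k c) = ∑ j ∈ (univ.gcd c).divisors,
      #((contentWords k fun i => c i / j).filter List.IsPrimitive) := by
  rw [contentWords_eq_biUnion_primitive hc, card_biUnion]
  · refine sum_congr rfl fun j hj => card_image_of_injective _ ?_
    exact List.flatten_replicate_injective (Nat.pos_of_mem_divisors hj).ne'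
  · intro j hj j' hj' hne
    simp only [Function.onFun, disjoint_left, mem_image, mem_filter]
    rintro _ ⟨u, ⟨-, hu⟩, rfl⟩ ⟨u', ⟨-, hu'⟩, h⟩
    have hlen : u'.length = u.length := by
      rw [← hu.rotationPeriod_flatten_replicate (Nat.pos_of_mem_divisors hj).ne', ← h,
        hu'.rotationPeriod_flatten_replicate (Nat.pos_of_mem_divisors hj').ne']
    have := congrArg List.length h
    simp only [List.length_flatten_replicate, hlen] at this
    exact hne (Nat.eq_of_mul_eq_mul_right (List.length_pos_iff.2 hu.ne_nil) this).symm

open ArithmeticFunction in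
theorem sum_moebius_smul_sum_divisors_mul {R : Type*} [AddCommGroup R] {g : ℕ} (hg : g ≠ 0)
    (P : ℕ → R) :
    ∑ m ∈ g.divisors, moebius m • ∑ i ∈ (g / m).divisors, P (m * i) = P 1 := by
  have hinv := (sum_eq_iff_sum_smul_moebius_eq (f := fun e => P (g / e))
    (g := fun d => ∑ e ∈ d.divisors, P (g / e))).1 (fun _ _ => rfl) g (Nat.pos_of_ne_zero hg)
  rw [Nat.sum_divisorsAntidiagonal (fun x y => moebius x • ∑ e ∈ y.divisors, P (g / e)),
    Nat.div_self (Nat.pos_of_ne_zero hg)] at hinv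
  rw [← hinv]
  refine sum_congr rfl fun m hm => congrArg _ ?_
  rw [← Nat.sum_div_divisors]
  refine sum_congr rfl fun i hi => congrArg P ?_
  obtain ⟨q, hq⟩ := Nat.dvd_of_mem_divisors hi
  rw [hq, Nat.mul_div_cancel_left _ (Nat.pos_of_mem_divisors hi)]
  refine (Nat.div_eq_of_eq_mul_left (Nat.pos_of_mem_divisors hi) ?_).symm
  rw [mul_right_comm, mul_assoc, ← hq, Nat.mul_div_cancel' (Nat.dvd_of_mem_divisors hm)]

theorem Finset.gcd_div_of_dvd_gcd {ι : Type*} (s : Finset ι) (f : ι → ℕ) {m : ℕ}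
    (hm : m ∣ s.gcd f) : s.gcd (fun i => f i / m) = s.gcd f / m := by
  rcases eq_or_ne m 0 with rfl | hm0
  · simp [gcd_eq_zero_iff]
  conv_rhs => rw [← s.gcd_congr rfl fun i hi => Nat.mul_div_cancel' (hm.trans (s.gcd_dvd hi))]
  rw [gcd_mul_left, normalize_eq, Nat.mul_div_cancel_left _ (Nat.pos_of_ne_zero hm0)]

open Classical in
theorem card_contentWords_div_eq_sum_card_primitive {k m : ℕ} {c : Fin k → ℕ}
    (hm : m ∈ (univ.gcd c).divisors) :
    #(contentWords k fun i => c i / m) = ∑ i ∈ (univ.gcd c / m).divisors,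
      #((contentWords k fun x => c x / (m * i)).filter List.IsPrimitive) := by
  obtain ⟨hmg, hg⟩ := Nat.mem_divisors.1 hm
  have hgm : univ.gcd (fun i => c i / m) = univ.gcd c / m := univ.gcd_div_of_dvd_gcd c hmg
  have hgm0 : univ.gcd c / m ≠ 0 :=
    (Nat.div_pos (Nat.le_of_dvd (Nat.pos_of_ne_zero hg) hmg) (Nat.pos_of_mem_divisors hm)).ne'
  rw [card_contentWords_eq_sum_card_primitive (hgm ▸ hgm0), hgm]
  simp only [Nat.div_div_eq_div_mul]

open Classical in
theorem Lk_eq_card_filter (k : ℕ) (c : Fin k → ℕ) :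
    Lk k c = #((contentWords k c).filter IsLyndon) := by
  rw [Lk, ← Set.ncard_coe_finset]
  congr 1
  ext w
  simp [HasContent, and_assoc]

open ArithmeticFunction in
theorem lyndon_content_count_formula_general (k : ℕ) (c : Fin k → ℕ) (n : ℕ) (hn : n = ∑ i, c i) :
    (n : ℤ) * Lk k c = ∑ j ∈ (Finset.univ.gcd c).divisors,
      moebius j * ((Nat.factorial (n / j) / ∏ i : Fin k, Nat.factorial (c i / j) : ℕ) : ℤ) := by
  classical
  set g := univ.gcd c
  rcases eq_or_ne g 0 with hg | hg
  · have hn0 : n = 0 := hn.trans (sum_eq_zero fun i _ => gcd_eq_zero_iff.1 hg i (mem_univ i))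
    simp [hg, hn0]
  have hwords : ∀ j ∈ g.divisors,
      (n / j)! / ∏ i, (c i / j)! = #(contentWords k fun i => c i / j) := fun j hj => by
    rw [card_contentWords, Nat.multinomial, hn, Nat.sum_div fun i _ =>
      (Nat.dvd_of_mem_divisors hj).trans (gcd_dvd (mem_univ i))]
  calc (n : ℤ) * Lk k c = #((contentWords k c).filter List.IsPrimitive) := by
        rw [Lk_eq_card_filter, card_filter_isPrimitive (n := n)
          (fun w hw => hn ▸ (mem_contentWords.1 hw).length_eq)
          (fun w hw s => mem_contentWords.2 ((mem_contentWords.1 hw).rotate s))]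
        norm_cast
    _ = ∑ m ∈ g.divisors, moebius m • ∑ i ∈ (g / m).divisors,
          (#((contentWords k fun x => c x / (m * i)).filter List.IsPrimitive) : ℤ) := by
        rw [sum_moebius_smul_sum_divisors_mul hg
          fun t => (#((contentWords k fun x => c x / t).filter List.IsPrimitive) : ℤ)]
        simp only [Nat.div_one]
    _ = _ := sum_congr rfl fun m hm => by
        rw [smul_eq_mul, hwords m hm, card_contentWords_div_eq_sum_card_primitive hm]
        push_cast; rfl

open ArithmeticFunction in
/-- Enumeration formula for Lyndon words with fixed content. -/
theorem lyndon_content_count_formula (k : ℕ) (hk : 2 ≤ k) (c : Fin k → ℕ)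
    (hc : ∀ i, 1 ≤ c i) (n : ℕ) (hn : n = ∑ i, c i) :
    (n : ℤ) * Lk k c = ∑ j ∈ (Finset.univ.gcd c).divisors,
      moebius j * ((Nat.factorial (n / j) / ∏ i : Fin k, Nat.factorial (c i / j) : ℕ) : ℤ) :=
  lyndon_content_count_formula_general k c n hn
end
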